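/- arXiv:1111.0068 — 4 statements merged into one kernel-verified Lean document; each statement's English description precedes it below -/
import Mathlib

section
/- For every binary operation op : ℝ → ℝ → ℝ, all decision diagrams B₁, B₂ over L, and every assignment σ : L → Bool, eval(Apply(B₁, B₂, op), σ) = op(eval(B₁, σ), eval(B₂, σ)). (Correctness of the Apply procedure for combining decision diagrams, per fixed valuation.) -/
/-- A decision diagram over a linearly ordered label type `L`:
either a real-valued leaf, or a node with a label and true/false subtrees. -/
inductive DD (L : Type) where
  | leaf (v : ℝ)
  | node (l : L) (t f : DD L)

/-- Evaluation of a decision diagram under an assignment `σ : L → Bool`. -/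
noncomputable def DD.eval {L : Type} (σ : L → Bool) : DD L → ℝ
  | .leaf v => v
  | .node l t f => if σ l then t.eval σ else f.eval σ

/-- The Apply procedure combining two decision diagrams with a binary operation. -/
noncomputable def DD.apply {L : Type} [LinearOrder L] (op : ℝ → ℝ → ℝ) :
    DD L → DD L → DD L
  | .leaf a, .leaf b => .leaf (op a b)
  | .node l₁ t₁ f₁, .leaf b =>
      .node l₁ (DD.apply op t₁ (.leaf b)) (DD.apply op f₁ (.leaf b))
  | .leaf a, .node l₂ t₂ f₂ =>
      .node l₂ (DD.apply op (.leaf a) t₂) (DD.apply op (.leaf a) f₂)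
  | .node l₁ t₁ f₁, .node l₂ t₂ f₂ =>
      if l₁ < l₂ then
        .node l₁ (DD.apply op t₁ (.node l₂ t₂ f₂)) (DD.apply op f₁ (.node l₂ t₂ f₂))
      else if l₂ < l₁ then
        .node l₂ (DD.apply op (.node l₁ t₁ f₁) t₂) (DD.apply op (.node l₁ t₁ f₁) f₂)
      else
        .node l₁ (DD.apply op t₁ t₂) (DD.apply op f₁ f₂)
  termination_by B₁ B₂ => sizeOf B₁ + sizeOf B₂

theorem DD.eval_node {L : Type} (σ : L → Bool) (l : L) (t f : DD L) :
    (DD.node l t f).eval σ = if σ l then t.eval σ else f.eval σ :=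
  rfl

/-- Correctness of Apply: per fixed valuation, the map of the combined diagram
is the operation applied to the maps of the operands. -/
theorem DD.apply_correct {L : Type} [LinearOrder L] (op : ℝ → ℝ → ℝ)
    (B₁ B₂ : DD L) (σ : L → Bool) :
    (DD.apply op B₁ B₂).eval σ = op (B₁.eval σ) (B₂.eval σ) := by
  induction B₁, B₂ using DD.apply.induct with
  | case1 a b => rw [apply]; rfl
  | case2 l₁ t₁ f₁ b iht ihf =>
    rw [apply, eval_node, iht, ihf, eval_node σ l₁, apply_ite (op · _)]
  | case3 a l₂ t₂ f₂ iht ihf =>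
    rw [apply, eval_node, iht, ihf, eval_node σ l₂, apply_ite (op _)]
  | case4 l₁ t₁ f₁ l₂ t₂ f₂ hlt iht ihf =>
    rw [apply, if_pos hlt, eval_node, iht, ihf, eval_node σ l₁, apply_ite (op · _)]
  | case5 l₁ t₁ f₁ l₂ t₂ f₂ hnlt hgt iht ihf =>
    rw [apply, if_neg hnlt, if_pos hgt, eval_node, iht, ihf, eval_node σ l₂, apply_ite (op _)]
  | case6 l₁ t₁ f₁ l₂ t₂ f₂ hnlt hngt iht ihf =>
    obtain rfl : l₁ = l₂ := le_antisymm (not_lt.mp hngt) (not_lt.mp hnlt)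
    rw [apply, if_neg hnlt, if_neg hngt, eval_node, iht, ihf, eval_node σ l₁ t₁,
      eval_node σ l₁ t₂, apply_ite₂ op]
end

section
/- Let B_n be a decision diagram all of whose leaf values are 0 or 1, and let B_t, B_f be arbitrary decision diagrams. Let B̂ = Apply(Apply(B_n, B_t, mult), Apply(Apply(leaf 1, B_n, sub), B_f, mult), add), i.e. the diagram [B_n ⊗ B_t] ⊕ [(1 ⊖ B_n) ⊗ B_f]. Then for every assignment σ : L → Bool: eval(B̂, σ) = eval(B_t, σ) if eval(B_n, σ) = 1, and eval(B̂, σ) = eval(B_f, σ) if eval(B_n, σ) = 0. (Correctness of the block-combination step used to compute regression of a value function through a deterministic action.) -/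
/-- All leaves of the diagram have value 0 or 1. -/
def DD.binaryLeaves {L : Type} : DD L → Prop
  | .leaf v => v = 0 ∨ v = 1
  | .node _ t f => t.binaryLeaves ∧ f.binaryLeaves

theorem DD.eval_apply {L : Type} [LinearOrder L] (op : ℝ → ℝ → ℝ) (σ : L → Bool)
    (B₁ B₂ : DD L) : (DD.apply op B₁ B₂).eval σ = op (B₁.eval σ) (B₂.eval σ) := by
  induction B₁, B₂ using DD.apply.induct with
  | case1 => simp only [DD.apply, DD.eval]
  | case2 l₁ t₁ f₁ b iht ihf =>
    simp only [DD.apply, DD.eval, iht, ihf]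
    split_ifs <;> rfl
  | case3 a l₂ t₂ f₂ iht ihf =>
    simp only [DD.apply, DD.eval, iht, ihf]
    split_ifs <;> rfl
  | case4 l₁ t₁ f₁ l₂ t₂ f₂ h₁₂ iht ihf =>
    simp only [DD.apply, h₁₂, if_true, DD.eval, iht, ihf]
    split_ifs <;> rfl
  | case5 l₁ t₁ f₁ l₂ t₂ f₂ h₁₂ h₂₁ iht ihf =>
    simp only [DD.apply, h₁₂, h₂₁, if_true, if_false, DD.eval, iht, ihf]
    split_ifs <;> rfl
  | case6 l₁ t₁ f₁ l₂ t₂ f₂ h₁₂ h₂₁ iht ihf =>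
    obtain rfl : l₁ = l₂ := le_antisymm (not_lt.1 h₂₁) (not_lt.1 h₁₂)
    simp only [DD.apply, lt_irrefl, if_false, DD.eval, iht, ihf]
    split_ifs <;> rfl

theorem DD.blockCombination_correct_general {L : Type} [LinearOrder L]
    (Bn Bt Bf : DD L)
    (Bhat : DD L)
    (hBhat : Bhat = DD.apply (· + ·) (DD.apply (· * ·) Bn Bt)
        (DD.apply (· * ·) (DD.apply (· - ·) (DD.leaf 1) Bn) Bf))
    (σ : L → Bool) :
    (Bn.eval σ = 1 → Bhat.eval σ = Bt.eval σ) ∧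
    (Bn.eval σ = 0 → Bhat.eval σ = Bf.eval σ) := by
  have hBhat_eval : Bhat.eval σ = Bn.eval σ * Bt.eval σ + (1 - Bn.eval σ) * Bf.eval σ := by
    simp only [hBhat, DD.eval_apply, DD.eval]
  constructor <;> intro hBn_eval <;> rw [hBhat_eval, hBn_eval] <;> ring

/-- Correctness of the block-combination step:
`B̂ = [Bₙ ⊗ B_t] ⊕ [(1 ⊖ Bₙ) ⊗ B_f]` selects `B_t` when `Bₙ` evaluates to 1
and `B_f` when `Bₙ` evaluates to 0, for every fixed valuation. -/
theorem DD.blockCombination_correct {L : Type} [LinearOrder L]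
    (Bn Bt Bf : DD L) (hBn : Bn.binaryLeaves)
    (Bhat : DD L)
    (hBhat : Bhat = DD.apply (· + ·) (DD.apply (· * ·) Bn Bt)
        (DD.apply (· * ·) (DD.apply (· - ·) (DD.leaf 1) Bn) Bf))
    (σ : L → Bool) :
    (Bn.eval σ = 1 → Bhat.eval σ = Bt.eval σ) ∧
    (Bn.eval σ = 0 → Bhat.eval σ = Bf.eval σ) :=
  DD.blockCombination_correct_general Bn Bt Bf Bhat hBhat σ
end

section
/- Let I be a nonempty type, let D be a type containing at least two distinct elements, and fix t : D. Let A, C : I → ℝ be functions whose ranges are bounded above, and define F : I × D → ℝ by F(i, d) = A(i) if d = t and F(i, d) = C(i) if d ≠ t. Then sup F = sup (i ↦ max(A(i), C(i))). (Abstract form of the key lemma for the equality reduction R9: for an equality node t = x whose variable x is fresh, maximizing over the value of x is the same as replacing the node by the pointwise maximum of its two children, provided the domain has more than one object.) -/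
/-- Abstract form of the key lemma for the equality reduction R9:
maximizing over the value of the fresh variable `x` (ranging over a domain `D`
with more than one object) is the same as replacing the equality node by the
pointwise maximum of its two children. -/
theorem R9_abstract_correct {I : Type*} [Nonempty I]
    {D : Type*} [Nontrivial D] [DecidableEq D] (t : D)
    (A C : I → ℝ)
    (hA : BddAbove (Set.range A)) (hC : BddAbove (Set.range C))
    (F : I × D → ℝ)
    (hF : ∀ i d, F (i, d) = if d = t then A i else C i) :
    (⨆ p, F p) = ⨆ i, max (A i) (C i) := by
  obtain ⟨a, ha⟩ := hA
  obtain ⟨c, hc⟩ := hC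
  simp only [upperBounds, Set.mem_range, forall_exists_index, Set.mem_setOf_eq] at ha hc
  have hA' : ∀ i, A i ≤ a := fun i => ha i rfl
  have hC' : ∀ i, C i ≤ c := fun i => hc i rfl
  have hM : BddAbove (Set.range fun i => max (A i) (C i)) := by
    refine ⟨max a c, ?_⟩
    rintro _ ⟨i, rfl⟩
    exact max_le_max (hA' i) (hC' i)
  have hFb : BddAbove (Set.range F) := by
    refine ⟨max a c, ?_⟩
    rintro _ ⟨⟨i, d⟩, rfl⟩
    rw [hF]
    split
    · exact le_max_of_le_left (hA' i)
    · exact le_max_of_le_right (hC' i)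
  obtain ⟨t', ht'⟩ := exists_ne t
  apply le_antisymm
  · refine ciSup_le fun ⟨i, d⟩ => ?_
    refine le_trans ?_ (le_ciSup hM i)
    rw [hF]
    split
    · exact le_max_left _ _
    · exact le_max_right _ _
  · refine ciSup_le fun i => max_le ?_ ?_
    · have := le_ciSup hFb (i, t)
      rwa [hF, if_pos rfl] at this
    · have := le_ciSup hFb (i, t')
      rwa [hF, if_neg ht'] at this
end

section
/- For a finite MDP, for every natural number n and every state s, the n-th value-iteration iterate starting from the reward equals the best n-stage value achievable from s: (T^[n] r)(s) = max over all lists π of decision rules of length n of V_π(s). (Correctness of value iteration: the n-th iterate is the maximum expected discounted value achievable in n steps; a single list of decision rules attains the maximum simultaneously for every state.) -/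
open Finset

/-- The Bellman backup operator of a finite MDP:
`(T V)(s) = max_{a} ( r(s) + γ · ∑_{s'} p s a s' · V(s') )`. -/
noncomputable def bellman {S A : Type*} [Fintype S] [Fintype A] [Nonempty A]
    (r : S → ℝ) (p : S → A → S → ℝ) (γ : ℝ) (V : S → ℝ) : S → ℝ :=
  fun s => Finset.univ.sup' Finset.univ_nonempty
    (fun a => r s + γ * ∑ s', p s a s' * V s')

/-- The value `V_π` of a finite list `π` of decision rules:
`V_[](s) = r(s)` and `V_{d::π'}(s) = r(s) + γ · ∑_{s'} p s (d s) s' · V_{π'}(s')`. -/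
noncomputable def listValue {S A : Type*} [Fintype S]
    (r : S → ℝ) (p : S → A → S → ℝ) (γ : ℝ) : List (S → A) → S → ℝ
  | [] => r
  | d :: π => fun s => r s + γ * ∑ s', p s (d s) s' * listValue r p γ π s'

/-!
By induction on `n`: the value of `d :: π` at `s` is the one-step lookahead value of `V_π` at
the action `d s`; bounding `V_π` by `T^[n] r` (the lookahead is monotone in `V`) and
maximising over the action gives `V_{d :: π} ≤ T^[n+1] r`. Conversely,
a rule `d` choosing at every state an action attaining the maximum in `T (T^[n] r)`, prepended
to an optimal list of length `n`, attains `T^[n+1] r` everywhere.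
-/

section

variable {S A : Type*} [Fintype S] (r : S → ℝ) (p : S → A → S → ℝ) (γ : ℝ)

noncomputable def lookahead (V : S → ℝ) (s : S) (a : A) : ℝ :=
  r s + γ * ∑ s', p s a s' * V s'

theorem listValue_cons (d : S → A) (π : List (S → A)) (s : S) :
    listValue r p γ (d :: π) s = lookahead r p γ (listValue r p γ π) s (d s) :=
  rfl

variable {p γ} in
theorem lookahead_mono (hp0 : ∀ s a s', 0 ≤ p s a s') (hγ0 : 0 ≤ γ) {V W : S → ℝ}
    (hVW : V ≤ W) (s : S) (a : A) : lookahead r p γ V s a ≤ lookahead r p γ W s a := by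
  unfold lookahead
  gcongr with s' _
  exacts [hp0 s a s', hVW s']

variable [Fintype A] [Nonempty A]

theorem lookahead_le_bellman (V : S → ℝ) (s : S) (a : A) :
    lookahead r p γ V s a ≤ bellman r p γ V s :=
  le_sup' (lookahead r p γ V s) (mem_univ a)

theorem exists_lookahead_eq_bellman (V : S → ℝ) :
    ∃ d : S → A, ∀ s, lookahead r p γ V s (d s) = bellman r p γ V s := by
  choose d _ hd using fun s => exists_mem_eq_sup' univ_nonempty (lookahead r p γ V s)
  exact ⟨d, fun s => (hd s).symm⟩

variable {p γ} in
theorem listValue_le_bellman_iterate (hp0 : ∀ s a s', 0 ≤ p s a s') (hγ0 : 0 ≤ γ)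
    (π : List (S → A)) : listValue r p γ π ≤ (bellman r p γ)^[π.length] r := by
  induction π with
  | nil => exact le_rfl
  | cons d π ih =>
    intro s
    rw [List.length_cons, Function.iterate_succ_apply', listValue_cons]
    exact (lookahead_mono r hp0 hγ0 ih s (d s)).trans (lookahead_le_bellman r p γ _ s (d s))

theorem exists_listValue_eq_bellman_iterate (n : ℕ) :
    ∃ π : List (S → A), π.length = n ∧ listValue r p γ π = (bellman r p γ)^[n] r := by
  induction n with
  | zero => exact ⟨[], rfl, rfl⟩
  | succ n ih =>
    obtain ⟨π, hlen, hπ⟩ := ih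
    obtain ⟨d, hd⟩ := exists_lookahead_eq_bellman r p γ ((bellman r p γ)^[n] r)
    refine ⟨d :: π, by rw [List.length_cons, hlen], funext fun s => ?_⟩
    rw [Function.iterate_succ_apply', listValue_cons, hπ, hd]

end

theorem value_iteration_correct_general {S A : Type*}
    [Fintype S] [Fintype A] [Nonempty A]
    (r : S → ℝ) (p : S → A → S → ℝ)
    (hp0 : ∀ s a s', 0 ≤ p s a s')
    (γ : ℝ) (hγ0 : 0 ≤ γ) (n : ℕ) :
    (∀ π : List (S → A), π.length = n →
        ∀ s, listValue r p γ π s ≤ (bellman r p γ)^[n] r s) ∧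
    (∃ π : List (S → A), π.length = n ∧
        ∀ s, listValue r p γ π s = (bellman r p γ)^[n] r s) := by
  refine ⟨fun π hπ => hπ ▸ listValue_le_bellman_iterate r hp0 hγ0 π, ?_⟩
  obtain ⟨π, hlen, hπ⟩ := exists_listValue_eq_bellman_iterate r p γ n
  exact ⟨π, hlen, congrFun hπ⟩

/-- Correctness of value iteration for a finite MDP: for every `n`, the `n`-th
Bellman iterate starting from the reward is, at every state, the maximum of
`V_π(s)` over all lists `π` of decision rules of length `n`; moreover a single
list attains the maximum simultaneously for every state. -/
theorem value_iteration_correct {S A : Type*}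
    [Fintype S] [Nonempty S] [Fintype A] [Nonempty A]
    (r : S → ℝ) (p : S → A → S → ℝ)
    (hp0 : ∀ s a s', 0 ≤ p s a s') (hp1 : ∀ s a, ∑ s', p s a s' = 1)
    (γ : ℝ) (hγ0 : 0 ≤ γ) (hγ1 : γ < 1) (n : ℕ) :
    (∀ π : List (S → A), π.length = n →
        ∀ s, listValue r p γ π s ≤ (bellman r p γ)^[n] r s) ∧
    (∃ π : List (S → A), π.length = n ∧
        ∀ s, listValue r p γ π s = (bellman r p γ)^[n] r s) :=
  value_iteration_correct_general r p hp0 γ hγ0 n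
end
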